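/- A surjective edge colouring c : E(G) → {red, blue} of a graph G is a NAP-colouring if and only if every edge uv of G has an endvertex (say v) such that all edges of G incident to v receive the same colour under c. -/
import Mathlib


open scoped Classical

namespace NAC

variable {V : Type*}

/-- Number of edges of `G` in the list `l` whose colour under `c` is `b`. -/
noncomputable def cCount (G : SimpleGraph V) (c : G.edgeSet → Bool) (b : Bool)
    (l : List (Sym2 V)) : ℕ :=
  (l.filter fun e => decide (∃ h : e ∈ G.edgeSet, c ⟨e, h⟩ = b)).length

/-- `c` is a NAC-colouring of `G`: it is surjective (both colours are used) and no
cycle of `G` contains exactly one edge of either colour. -/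
def IsNAC (G : SimpleGraph V) (c : G.edgeSet → Bool) : Prop :=
  Function.Surjective c ∧
  ∀ ⦃u : V⦄ (w : G.Walk u u), w.IsCycle →
    cCount G c true w.edges ≠ 1 ∧ cCount G c false w.edges ≠ 1

/-- The number of NAC-colourings of `G`, divided by two. -/
noncomputable def nacNum (G : SimpleGraph V) : ℕ :=
  {c : G.edgeSet → Bool | IsNAC G c}.ncard / 2

end NAC

namespace NAC

/-- `c` is a NAP-colouring of `G`: it is surjective, every 3-cycle is monochromatic, and
there is no path `(u₁,u₂,u₃,u₄)` of length 3 whose consecutive edges alternate in colour. -/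
def IsNAP (G : SimpleGraph V) (c : G.edgeSet → Bool) : Prop :=
  Function.Surjective c ∧
  (∀ (u v w : V) (h1 : G.Adj u v) (h2 : G.Adj v w) (_ : G.Adj w u),
    c ⟨s(u, v), G.mem_edgeSet.mpr h1⟩ = c ⟨s(v, w), G.mem_edgeSet.mpr h2⟩) ∧
  (∀ (u1 u2 u3 u4 : V) (h1 : G.Adj u1 u2) (h2 : G.Adj u2 u3) (h3 : G.Adj u3 u4),
    u1 ≠ u3 → u2 ≠ u4 → u1 ≠ u4 →
    ¬(c ⟨s(u1, u2), G.mem_edgeSet.mpr h1⟩ ≠ c ⟨s(u2, u3), G.mem_edgeSet.mpr h2⟩ ∧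
      c ⟨s(u2, u3), G.mem_edgeSet.mpr h2⟩ ≠ c ⟨s(u3, u4), G.mem_edgeSet.mpr h3⟩))

end NAC


lemma csymm {V : Type*} (G : SimpleGraph V) (c : G.edgeSet → Bool) {u v : V}
    (h : G.Adj u v) :
    c ⟨s(u, v), G.mem_edgeSet.mpr h⟩ = c ⟨s(v, u), G.mem_edgeSet.mpr h.symm⟩ := by
  congr 1
  exact Subtype.ext (Sym2.eq_swap)

open NAC in
/-- A surjective edge colouring is a NAP-colouring iff every edge has an endvertex all of
whose incident edges receive the same colour. -/
theorem statement4 {V : Type*} (G : SimpleGraph V) (c : G.edgeSet → Bool)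
    (hsurj : Function.Surjective c) :
    IsNAP G c ↔
      ∀ (u v : V), G.Adj u v →
        ((∀ (w w' : V) (hw : G.Adj u w) (hw' : G.Adj u w'),
            c ⟨s(u, w), G.mem_edgeSet.mpr hw⟩ = c ⟨s(u, w'), G.mem_edgeSet.mpr hw'⟩) ∨
         (∀ (w w' : V) (hw : G.Adj v w) (hw' : G.Adj v w'),
            c ⟨s(v, w), G.mem_edgeSet.mpr hw⟩ = c ⟨s(v, w'), G.mem_edgeSet.mpr hw'⟩)) := by
  constructor
  · rintro ⟨-, htri, hpath⟩ u v huv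
    by_contra hcon
    push_neg at hcon
    obtain ⟨⟨w, w', hw, hw', hne⟩, ⟨x, x', hx, hx', hne'⟩⟩ := hcon
    set a := c ⟨s(u, v), G.mem_edgeSet.mpr huv⟩ with ha
    -- pick an edge at u with colour ≠ a
    have hu1 : ∃ w1, ∃ hw1 : G.Adj u w1, c ⟨s(u, w1), G.mem_edgeSet.mpr hw1⟩ ≠ a := by
      by_cases h1 : c ⟨s(u, w), G.mem_edgeSet.mpr hw⟩ = a
      · exact ⟨w', hw', by rw [← h1] at *; exact fun hc => hne (h1.trans hc.symm)⟩
      · exact ⟨w, hw, h1⟩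
    have hv1 : ∃ x1, ∃ hx1 : G.Adj v x1, c ⟨s(v, x1), G.mem_edgeSet.mpr hx1⟩ ≠ a := by
      by_cases h1 : c ⟨s(v, x), G.mem_edgeSet.mpr hx⟩ = a
      · exact ⟨x', hx', fun hc => hne' (h1.trans hc.symm)⟩
      · exact ⟨x, hx, h1⟩
    obtain ⟨w1, hw1, hcw1⟩ := hu1
    obtain ⟨x1, hx1, hcx1⟩ := hv1
    have hw1v : w1 ≠ v := by
      rintro rfl; exact hcw1 rfl
    have hx1u : x1 ≠ u := by
      rintro rfl
      exact hcx1 (csymm G c huv).symm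
    have hw1x1 : w1 ≠ x1 := by
      rintro rfl
      have := htri u v w1 huv hx1 hw1.symm
      exact hcx1 this.symm
    have := hpath w1 u v x1 hw1.symm huv hx1 hw1v (Ne.symm hx1u) hw1x1
    apply this
    constructor
    · rw [← csymm G c hw1]; exact hcw1
    · exact fun hc => hcx1 hc.symm
  · intro h
    refine ⟨hsurj, ?_, ?_⟩
    · intro u v w h1 h2 h3
      rcases h u v h1 with hu | hv
      · have e1 := hu v w h1 h3.symm
        rcases h v w h2 with hv | hw
        · have e2 := hv u w h1.symm h2
          rw [csymm G c h1]; exact e2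
        · have e3 := hw u v h3 h2.symm
          rw [e1, csymm G c h3.symm, e3, ← csymm G c h2]
      · have e2 := hv u w h1.symm h2
        rw [csymm G c h1]; exact e2
    · rintro u1 u2 u3 u4 h1 h2 h3 n13 n24 n14 ⟨hab, hbc⟩
      rcases h u2 u3 h2 with h2' | h3'
      · exact hab ((csymm G c h1).trans (h2' u1 u3 h1.symm h2))
      · exact hbc ((csymm G c h2).trans (h3' u2 u4 h2.symm h3))
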